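/- arXiv:2601.00729 — 3 statements merged into one kernel-verified Lean document; each statement's English description precedes it below -/
import Mathlib

section
/- The Fourier transform converts the t-product into face-wise products: if C = A * B is the t-product of A ∈ ℝ^{m×ℓ×p} and B ∈ ℝ^{ℓ×n×p}, then the frontal slices of the mode-3 DFT satisfy Ĉ_i = Â_i B̂_i for i = 1,…,p. -/
open Complex Matrix BigOperators
open scoped Kronecker

/-- primitive root ω = exp(-2πi/p) used in the DFT. -/
noncomputable def tOmega (p : ℕ) : ℂ := Complex.exp (-(2 * Real.pi * Complex.I) / p)

/-- unitary DFT matrix of order ℓ, (F)_{k,j} = ω^{k j}/√ℓ (0-based indices). -/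
noncomputable def dftMatrix (ℓ : ℕ) : Matrix (Fin ℓ) (Fin ℓ) ℂ :=
  Matrix.of fun k j => (tOmega ℓ) ^ ((k : ℕ) * (j : ℕ)) / (Real.sqrt ℓ : ℂ)

/-- unnormalized mode-3 DFT of a real third-order tensor given by its frontal slices. -/
noncomputable def dft3 {m n p : ℕ} (A : Fin p → Matrix (Fin m) (Fin n) ℝ) :
    Fin p → Matrix (Fin m) (Fin n) ℂ :=
  fun k => ∑ l : Fin p, (tOmega p) ^ ((k : ℕ) * (l : ℕ)) • (A l).map (fun x => (x : ℂ))

/-- t-product of third-order tensors (circular convolution of frontal slices),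
    equivalently MatVec⁻¹[Bcirc(A)·MatVec(B)]. -/
def tProd {m l n p : ℕ} (A : Fin p → Matrix (Fin m) (Fin l) ℝ)
    (B : Fin p → Matrix (Fin l) (Fin n) ℝ) : Fin p → Matrix (Fin m) (Fin n) ℝ :=
  fun k => ∑ j : Fin p, A (k - j) * B j

/-- t-transpose: transpose each frontal slice and reverse the order of slices 2,…,p. -/
def tTrans {m n p : ℕ} (A : Fin p → Matrix (Fin m) (Fin n) ℝ) :
    Fin p → Matrix (Fin n) (Fin m) ℝ :=
  fun k => (A (-k))ᵀ

/-- identity tensor: first frontal slice is I, the others vanish. -/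
def tId (m p : ℕ) : Fin p → Matrix (Fin m) (Fin m) ℝ :=
  fun k => if (k : ℕ) = 0 then 1 else 0

/-- f-trace: average of the traces of the Fourier-domain frontal slices. -/
noncomputable def tTraceF {m p : ℕ} (A : Fin p → Matrix (Fin m) (Fin m) ℝ) : ℂ :=
  (1 / (p : ℂ)) * ∑ i : Fin p, (dft3 A i).trace

/-- squared Frobenius norm of a tensor. -/
def frob2 {m n p : ℕ} (A : Fin p → Matrix (Fin m) (Fin n) ℝ) : ℝ :=
  ∑ k : Fin p, ∑ r : Fin m, ∑ c : Fin n, (A k r c) ^ 2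

/-- Frobenius inner product of tensors. -/
def finner {m n p : ℕ} (A B : Fin p → Matrix (Fin m) (Fin n) ℝ) : ℝ :=
  ∑ k : Fin p, ∑ r : Fin m, ∑ c : Fin n, A k r c * B k r c

/-- block circulant matrix of a tensor (complex-valued entries). -/
noncomputable def bcirc {m n p : ℕ} (A : Fin p → Matrix (Fin m) (Fin n) ℝ) :
    Matrix (Fin p × Fin m) (Fin p × Fin n) ℂ :=
  Matrix.of fun x y => (A (x.1 - y.1) x.2 y.2 : ℂ)

lemma tOmega_pow_self {p : ℕ} (hp : p ≠ 0) : tOmega p ^ p = 1 := by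
  rw [tOmega, ← Complex.exp_nat_mul, mul_div_cancel₀ _ (Nat.cast_ne_zero.mpr hp)]
  simpa using Complex.exp_int_mul_two_pi_mul_I (-1)

lemma pow_finVal_add {M : Type*} [Monoid M] {p : ℕ} {z : M} (hz : z ^ p = 1) (a b : Fin p) :
    z ^ ((a + b : Fin p) : ℕ) = z ^ (a : ℕ) * z ^ (b : ℕ) := by
  rw [Fin.val_add, ← pow_eq_pow_mod _ hz, pow_add]

/-- As `z ^ p = 1`, `k ↦ z ^ k` is a character of `Fin p`: this is the convolution theorem for the
cyclic group. -/
theorem sum_pow_smul_circConv {R : Type*} [CommSemiring R] {p : ℕ} [NeZero p]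
    {ι κ μ : Type*} [Fintype κ] {z : R} (hz : z ^ p = 1)
    (f : Fin p → Matrix ι κ R) (g : Fin p → Matrix κ μ R) :
    ∑ k : Fin p, z ^ (k : ℕ) • ∑ j : Fin p, f (k - j) * g j
      = (∑ a : Fin p, z ^ (a : ℕ) • f a) * ∑ b : Fin p, z ^ (b : ℕ) • g b := by
  calc ∑ k : Fin p, z ^ (k : ℕ) • ∑ j : Fin p, f (k - j) * g j
      = ∑ b : Fin p, ∑ a : Fin p, z ^ ((a + b : Fin p) : ℕ) • (f a * g b) := by
        simp_rw [Finset.smul_sum]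
        rw [Finset.sum_comm]
        refine Finset.sum_congr rfl fun b _ => ?_
        exact (Fintype.sum_equiv (Equiv.addRight b) _ _ fun a => by simp).symm
    _ = (∑ a : Fin p, z ^ (a : ℕ) • f a) * ∑ b : Fin p, z ^ (b : ℕ) • g b := by
        simp_rw [Matrix.sum_mul, Matrix.mul_sum, Matrix.smul_mul, Matrix.mul_smul, smul_smul,
          pow_finVal_add hz]
        exact Finset.sum_comm

lemma map_ofReal_tProd {m l n p : ℕ} (A : Fin p → Matrix (Fin m) (Fin l) ℝ)
    (B : Fin p → Matrix (Fin l) (Fin n) ℝ) (k : Fin p) :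
    (tProd A B k).map (fun x => (x : ℂ))
      = ∑ j : Fin p, (A (k - j)).map (fun x => (x : ℂ)) * (B j).map (fun x => (x : ℂ)) := by
  ext r c
  simp [tProd, Matrix.sum_apply, Matrix.mul_apply]

/-- The Fourier transform converts the t-product into face-wise matrix products. -/
theorem dft3_tprod (m l n p : ℕ) (A : Fin p → Matrix (Fin m) (Fin l) ℝ)
    (B : Fin p → Matrix (Fin l) (Fin n) ℝ) :
    ∀ i : Fin p, dft3 (tProd A B) i = dft3 A i * dft3 B i := by
  intro i
  have : NeZero p := ⟨i.pos.ne'⟩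
  have hz : (tOmega p ^ (i : ℕ)) ^ p = 1 := by
    rw [pow_right_comm, tOmega_pow_self (NeZero.ne p), one_pow]
  unfold dft3
  simp_rw [map_ofReal_tProd, pow_mul]
  exact sum_pow_smul_circConv hz (fun a => (A a).map fun x => (x : ℂ))
    (fun b => (B b).map fun x => (x : ℂ))
end

section
/- Generalized trace maximization: let A, B ∈ ℝ^{m×m} be symmetric with B positive definite, and d ≤ m. Then the maximum of Trace(VᵀAV) over V ∈ ℝ^{m×d} subject to VᵀBV = I_d equals the sum of the d largest generalized eigenvalues μ_1 ≥ … ≥ μ_d of the pair (A, B), i.e., the d largest eigenvalues of B^{-1/2} A B^{-1/2}. -/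
/-!
The substitution `Y = Uᵀ S V` turns the constraint `Vᵀ B V = 1` into `Yᵀ Y = 1` and
`Vᵀ A V` into `Yᵀ (diagonal μ) Y`, which reduces the problem to a diagonal `A` and `B = 1`.
There `trace (Yᵀ (diagonal μ) Y) = ∑ i, μ i * c i` with `c` the diagonal of the orthogonal
projection `Y Yᵀ`, so `0 ≤ c ≤ 1` and `∑ i, c i = d`; for decreasing `μ` such a weighted sum is
at most `μ 0 + ⋯ + μ (d - 1)`, which the first `d` coordinate vectors attain.
-/

open Complex Matrix BigOperators
open scoped Kronecker

section

variable {R : Type*} [CommRing R]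

namespace Matrix

def constrainedTraces {n : Type*} [Fintype n] (M N : Matrix n n R) (k : Type*) [Fintype k]
    [DecidableEq k] : Set R :=
  {t | ∃ V : Matrix n k R, Vᵀ * M * V = 1 ∧ (Vᵀ * N * V).trace = t}

lemma constrainedTraces_congr {n k : Type*} [Fintype n] [DecidableEq n] [Fintype k]
    [DecidableEq k] (M N : Matrix n n R) {P Q : Matrix n n R} (hPQ : P * Q = 1) :
    constrainedTraces (Pᵀ * M * P) (Pᵀ * N * P) k = constrainedTraces M N k := by
  have hform : ∀ (L : Matrix n n R) (V : Matrix n k R),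
      Vᵀ * (Pᵀ * L * P) * V = (P * V)ᵀ * L * (P * V) := fun L V => by
    simp only [transpose_mul, Matrix.mul_assoc]
  ext t
  constructor
  · rintro ⟨V, hV, rfl⟩
    exact ⟨P * V, hform M V ▸ hV, by rw [hform]⟩
  · rintro ⟨Y, hY, rfl⟩
    have hPQY : P * (Q * Y) = Y := by rw [← Matrix.mul_assoc, hPQ, Matrix.one_mul]
    exact ⟨Q * Y, by rw [hform, hPQY, hY], by rw [hform, hPQY]⟩

end Matrix

section Ordered

variable [LinearOrder R] [IsStrictOrderedRing R]

lemma Matrix.diag_le_one_of_mul_self_eq_self {n : Type*} [Fintype n] {P : Matrix n n R}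
    (hPt : Pᵀ = P) (hPP : P * P = P) (i : n) : P i i ≤ 1 := by
  have hsymm : ∀ j, P j i = P i j := fun j => congrFun (congrFun hPt i) j
  have hsq : P i i = ∑ j, P i j ^ 2 := by
    conv_lhs => rw [← hPP]
    simp only [mul_apply, hsymm, sq]
  have hle : P i i ^ 2 ≤ P i i :=
    hsq ▸ Finset.single_le_sum (fun j _ => sq_nonneg (P i j)) (Finset.mem_univ i)
  nlinarith

lemma Finset.sum_mul_le_sum_of_threshold {ι : Type*} [Fintype ι] [DecidableEq ι] (s : Finset ι)
    (μ c : ι → R) (t : R) (hs : ∀ i ∈ s, t ≤ μ i) (hsc : ∀ i ∉ s, μ i ≤ t)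
    (hc0 : ∀ i, 0 ≤ c i) (hc1 : ∀ i, c i ≤ 1) (hc : ∑ i, c i = s.card) :
    ∑ i, μ i * c i ≤ ∑ i ∈ s, μ i := by
  have hpt : ∀ i, μ i * c i ≤ (if i ∈ s then μ i - t else 0) + t * c i := by
    intro i
    by_cases hi : i ∈ s
    · simp only [hi, if_true]; nlinarith [hs i hi, hc1 i]
    · simp only [hi, if_false]; nlinarith [hsc i hi, hc0 i]
  calc ∑ i, μ i * c i ≤ ∑ i, ((if i ∈ s then μ i - t else 0) + t * c i) :=
        Finset.sum_le_sum fun i _ => hpt i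
    _ = ∑ i ∈ s, μ i := by
        rw [Finset.sum_add_distrib, ← Finset.mul_sum, hc, Finset.sum_ite_mem, Finset.univ_inter,
          Finset.sum_sub_distrib, Finset.sum_const, nsmul_eq_mul]
        ring

lemma Fin.sum_mul_le_sum_castLE_of_antitone {m d : ℕ} (hd : d ≤ m) {μ : Fin m → R}
    (hμ : Antitone μ) (c : Fin m → R) (hc0 : ∀ i, 0 ≤ c i) (hc1 : ∀ i, c i ≤ 1)
    (hc : ∑ i, c i = d) : ∑ i, μ i * c i ≤ ∑ j : Fin d, μ (Fin.castLE hd j) := by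
  set s := Finset.univ.map (Fin.castLEEmb hd)
  have hmem : ∀ i : Fin m, i ∈ s ↔ (i : ℕ) < d := fun i =>
    ⟨fun h => by obtain ⟨j, -, rfl⟩ := Finset.mem_map.mp h; exact j.isLt,
     fun h => Finset.mem_map.mpr ⟨⟨i, h⟩, Finset.mem_univ _, rfl⟩⟩
  obtain ⟨t, hs, hsc⟩ : ∃ t, (∀ i ∈ s, t ≤ μ i) ∧ ∀ i ∉ s, μ i ≤ t := by
    by_cases hdm : d < m
    · refine ⟨μ ⟨d, hdm⟩, fun i hi => hμ ?_, fun i hi => hμ ?_⟩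
      · exact Fin.le_def.mpr ((hmem i).mp hi).le
      · exact Fin.le_def.mpr (not_lt.mp ((hmem i).not.mp hi))
    · obtain ⟨t, ht⟩ := (Set.finite_range μ).bddBelow
      exact ⟨t, fun i _ => ht ⟨i, rfl⟩, fun i hi => absurd ((hmem i).mpr (by omega)) hi⟩
  have := Finset.sum_mul_le_sum_of_threshold s μ c t hs hsc hc0 hc1 (by simpa [s] using hc)
  simpa [s] using this

namespace Matrix

lemma trace_transpose_mul_diagonal_mul_le {m d : ℕ} (hd : d ≤ m) {μ : Fin m → R}
    (hμ : Antitone μ) {Y : Matrix (Fin m) (Fin d) R} (hY : Yᵀ * Y = 1) :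
    (Yᵀ * diagonal μ * Y).trace ≤ ∑ j : Fin d, μ (Fin.castLE hd j) := by
  set P := Y * Yᵀ with hP
  have htrace : (Yᵀ * diagonal μ * Y).trace = ∑ i, μ i * P i i := by
    rw [trace_mul_cycle]
    exact Finset.sum_congr rfl fun i _ => by rw [diag_apply, mul_diagonal, mul_comm]
  have hPt : Pᵀ = P := by rw [hP, transpose_mul, transpose_transpose]
  have hPP : P * P = P := by
    rw [hP, Matrix.mul_assoc, ← Matrix.mul_assoc Yᵀ, hY, Matrix.one_mul]
  have hP0 : ∀ i, 0 ≤ P i i := fun i => by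
    simp only [hP, mul_apply, transpose_apply]
    exact Finset.sum_nonneg fun j _ => mul_self_nonneg _
  have hPsum : ∑ i, P i i = d := by
    change P.trace = d
    rw [hP, trace_mul_comm, hY, trace_one, Fintype.card_fin]
  rw [htrace]
  exact Fin.sum_mul_le_sum_castLE_of_antitone hd hμ _ hP0
    (diag_le_one_of_mul_self_eq_self hPt hPP) hPsum

lemma isGreatest_constrainedTraces_one_diagonal {m d : ℕ} (hd : d ≤ m) {μ : Fin m → R}
    (hμ : Antitone μ) :
    IsGreatest (constrainedTraces 1 (diagonal μ) (Fin d)) (∑ j : Fin d, μ (Fin.castLE hd j)) := by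
  set E := (1 : Matrix (Fin m) (Fin m) R).submatrix id (Fin.castLE hd)
  have hE : ∀ M : Matrix (Fin m) (Fin m) R,
      Eᵀ * M * E = M.submatrix (Fin.castLE hd) (Fin.castLE hd) :=
    fun M => by ext i j; simp [E, mul_apply, one_apply]
  refine ⟨⟨E, ?_, ?_⟩, ?_⟩
  · rw [hE, submatrix_one _ (Fin.castLE_injective hd)]
  · rw [hE, submatrix_diagonal _ _ (Fin.castLE_injective hd), trace_diagonal]
    rfl
  · rintro t ⟨Y, hY, rfl⟩
    rw [Matrix.mul_one] at hY
    exact trace_transpose_mul_diagonal_mul_le hd hμ hY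

end Matrix

end Ordered

end

theorem generalized_trace_max_general (m d : ℕ) (hd : d ≤ m) (A B : Matrix (Fin m) (Fin m) ℝ)
    (S : Matrix (Fin m) (Fin m) ℝ) (hS : S.PosDef) (hSS : S * S = B)
    (U : Matrix (Fin m) (Fin m) ℝ) (μ : Fin m → ℝ)
    (hU : Uᵀ * U = 1) (hdec : Antitone μ)
    (hspec : S⁻¹ * A * S⁻¹ = U * Matrix.diagonal μ * Uᵀ) :
    IsGreatest { t : ℝ | ∃ V : Matrix (Fin m) (Fin d) ℝ,
        Vᵀ * B * V = 1 ∧ (Vᵀ * A * V).trace = t }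
      (∑ j : Fin d, μ (Fin.castLE hd j)) := by
  have hSt : Sᵀ = S := hS.isHermitian.eq
  have hSdet : IsUnit S.det := (isUnit_iff_isUnit_det S).mp hS.isUnit
  set P := Uᵀ * S
  have hPQ : P * (S⁻¹ * U) = 1 := by
    rw [Matrix.mul_assoc, ← Matrix.mul_assoc S, mul_nonsing_inv S hSdet, Matrix.one_mul, hU]
  have hB : B = Pᵀ * 1 * P := by
    rw [Matrix.mul_one, transpose_mul, hSt, transpose_transpose, Matrix.mul_assoc,
      ← Matrix.mul_assoc U, mul_eq_one_comm.mp hU, Matrix.one_mul, hSS]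
  have hA : A = Pᵀ * diagonal μ * P := by
    calc A = S * (S⁻¹ * A * S⁻¹) * S := by
          simp only [Matrix.mul_assoc, nonsing_inv_mul S hSdet, Matrix.mul_one]
          rw [← Matrix.mul_assoc, mul_nonsing_inv S hSdet, Matrix.one_mul]
      _ = Pᵀ * diagonal μ * P := by
          rw [hspec, transpose_mul, hSt, transpose_transpose]
          simp only [P, Matrix.mul_assoc]
  change IsGreatest (constrainedTraces B A (Fin d)) _
  rw [hB, hA, constrainedTraces_congr _ _ hPQ]
  exact isGreatest_constrainedTraces_one_diagonal hd hdec

/-- Generalized trace maximization: max of Trace(VᵀAV) subject to VᵀBV = I equals the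
    sum of the d largest eigenvalues of B^{-1/2} A B^{-1/2}. -/
theorem generalized_trace_max (m d : ℕ) (hd : d ≤ m) (A B : Matrix (Fin m) (Fin m) ℝ)
    (hA : A.IsHermitian) (hB : B.PosDef)
    (S : Matrix (Fin m) (Fin m) ℝ) (hS : S.PosDef) (hSS : S * S = B)
    (U : Matrix (Fin m) (Fin m) ℝ) (μ : Fin m → ℝ)
    (hU : Uᵀ * U = 1) (hdec : Antitone μ)
    (hspec : S⁻¹ * A * S⁻¹ = U * Matrix.diagonal μ * Uᵀ) :
    IsGreatest { t : ℝ | ∃ V : Matrix (Fin m) (Fin d) ℝ,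
        Vᵀ * B * V = 1 ∧ (Vᵀ * A * V).trace = t }
      (∑ j : Fin d, μ (Fin.castLE hd j)) :=
  generalized_trace_max_general m d hd A B S hS hSS U μ hU hdec hspec
end

section
/- Tensor trace maximization (Theorem 3.2): let A ∈ ℝ^{m×m×p} be f-symmetric and f-positive-definite. Then max over V ∈ ℝ^{m×d×p} with V^T * V = I of Trace_f(V^T * A * V) equals (1/p) Σ_{i=1}^p Σ_{j=1}^d λ_j(Â_i), where λ_1(Â_i) ≥ … ≥ λ_m(Â_i) are the eigenvalues of the i-th Fourier-domain frontal slice Â_i. -/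
open Complex Matrix BigOperators
open scoped Kronecker ComplexOrder

/-!
Under the mode-3 DFT `Â k`, the t-product becomes the slice-wise matrix product and the
t-transpose the slice-wise conjugate transpose, so `Vᵀ * V = I` says that every `V̂ k` has
orthonormal columns and `Trace_f (Vᵀ * A * V)` is the mean of the `Re tr ((V̂ k)ᴴ (Â k) (V̂ k))`.
Each slice is a Ky Fan problem: writing `Â k = U diag μ Uᴴ` and `P = (Uᴴ W)(Uᴴ W)ᴴ`, the trace
is `∑ μ_j P_jj` with weights `0 ≤ P_jj ≤ 1` (as `P` and `1 - P` are orthogonal projections)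
of total mass `d`, hence at most the sum of the `d` largest `μ_j`, with equality for the
leading eigenvectors. For the bound to be attained by a real tensor, the slice maximizers
must satisfy `W (-k) = conj (W k)`, which is possible because `Â (-k) = conj (Â k)`; on the
self-conjugate slices `k = -k` the slice is real symmetric and the real spectral theorem
provides a real maximizer. The inverse DFT of such a family is then real.
-/

open ComplexConjugate

section Character

variable {p : ℕ}

noncomputable def tChar (p : ℕ) (k l : Fin p) : ℂ := tOmega p ^ (k.val * l.val)

lemma tOmega_isPrimitiveRoot [NeZero p] : IsPrimitiveRoot (tOmega p) p := by
  rw [tOmega, neg_div, Complex.exp_neg]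
  exact (Complex.isPrimitiveRoot_exp p (NeZero.ne p)).inv

lemma tOmega_pow_mod [NeZero p] (n : ℕ) : tOmega p ^ (n % p) = tOmega p ^ n := by
  conv_rhs => rw [← Nat.mod_add_div n p, pow_add, pow_mul, tOmega_isPrimitiveRoot.pow_eq_one,
    one_pow, mul_one]

lemma tChar_comm (k l : Fin p) : tChar p k l = tChar p l k := by
  rw [tChar, tChar, mul_comm]

lemma tChar_add_right (k a b : Fin p) : tChar p k (a + b) = tChar p k a * tChar p k b := by
  have : NeZero p := NeZero.of_pos k.pos
  rw [tChar, tChar, tChar, ← pow_add, ← mul_add, Fin.val_add, ← tOmega_pow_mod,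
    Nat.mul_mod, Nat.mod_mod, ← Nat.mul_mod, tOmega_pow_mod]

lemma tChar_add_left (a b l : Fin p) : tChar p (a + b) l = tChar p a l * tChar p b l := by
  rw [tChar_comm, tChar_add_right, tChar_comm, tChar_comm l]

lemma conj_tChar_eq_neg_right (k l : Fin p) : conj (tChar p k l) = tChar p k (-l) := by
  have : NeZero p := NeZero.of_pos k.pos
  have hnorm : ‖tChar p k l‖ = 1 := by
    rw [tChar, norm_pow, tOmega_isPrimitiveRoot.norm'_eq_one (NeZero.ne p), one_pow]
  rw [← Complex.inv_eq_conj hnorm]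
  refine (eq_inv_of_mul_eq_one_left ?_).symm
  rw [← tChar_add_right, neg_add_cancel, tChar, Fin.val_zero, mul_zero, pow_zero]

lemma conj_tChar_eq_neg_left (k l : Fin p) : conj (tChar p k l) = tChar p (-k) l := by
  rw [tChar_comm, conj_tChar_eq_neg_right, tChar_comm]

lemma sum_tChar [NeZero p] (k : Fin p) : ∑ l, tChar p k l = if k = 0 then (p : ℂ) else 0 := by
  simp_rw [tChar, pow_mul]
  rw [Fin.sum_univ_eq_sum_range (fun l => (tOmega p ^ k.val) ^ l)]
  split_ifs with hk
  · simp [hk]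
  · have hne : tOmega p ^ k.val ≠ 1 :=
      tOmega_isPrimitiveRoot.pow_ne_one_of_pos_of_lt (Fin.val_ne_zero_iff.2 hk) k.isLt
    rw [geom_sum_eq hne, ← pow_mul, mul_comm, pow_mul, tOmega_isPrimitiveRoot.pow_eq_one,
      one_pow, sub_self, zero_div]

lemma sum_tChar_mul_conj (k j : Fin p) :
    ∑ l, tChar p k l * conj (tChar p j l) = if k = j then (p : ℂ) else 0 := by
  have : NeZero p := NeZero.of_pos k.pos
  simp_rw [conj_tChar_eq_neg_left, ← tChar_add_left, sum_tChar, ← sub_eq_add_neg, sub_eq_zero]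

end Character

section DFT

variable {p : ℕ}

lemma dft3_eq {m n : ℕ} (A : Fin p → Matrix (Fin m) (Fin n) ℝ) (k : Fin p) :
    dft3 A k = ∑ l, tChar p k l • (A l).map (↑) := rfl

lemma dft3_apply {m n : ℕ} (A : Fin p → Matrix (Fin m) (Fin n) ℝ) (k : Fin p) (r : Fin m)
    (c : Fin n) : dft3 A k r c = ∑ l, tChar p k l * A l r c := by
  simp [dft3_eq, Matrix.sum_apply]

lemma map_ofReal_mul {l m n : ℕ} (M : Matrix (Fin l) (Fin m) ℝ) (N : Matrix (Fin m) (Fin n) ℝ) :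
    (M * N).map ((↑) : ℝ → ℂ) = M.map (↑) * N.map (↑) :=
  Matrix.map_mul (f := Complex.ofRealHom)

lemma map_ofReal_sum {m n : ℕ} (M : Fin p → Matrix (Fin m) (Fin n) ℝ) :
    (∑ j, M j).map ((↑) : ℝ → ℂ) = ∑ j, (M j).map (↑) :=
  map_sum Complex.ofRealHom.toAddMonoidHom.mapMatrix _ _

lemma dft3_tProd {l m n : ℕ} (A : Fin p → Matrix (Fin l) (Fin m) ℝ)
    (B : Fin p → Matrix (Fin m) (Fin n) ℝ) (k : Fin p) :
    dft3 (tProd A B) k = dft3 A k * dft3 B k := by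
  have : NeZero p := NeZero.of_pos k.pos
  simp only [dft3_eq, tProd, map_ofReal_sum, map_ofReal_mul, Matrix.sum_mul, Matrix.mul_sum,
    Finset.smul_sum, Matrix.smul_mul, Matrix.mul_smul, smul_smul, ← tChar_add_right]
  rw [Finset.sum_comm]
  refine Finset.sum_congr rfl fun j _ => ?_
  -- the two sides differ only by defeq `Sub` and `HMul` instances, hence the `rfl`
  exact Fintype.sum_equiv (Equiv.subRight j) _ _ fun x => by
    rw [Equiv.subRight_apply, add_sub_cancel]
    rfl

lemma dft3_tTrans {m n : ℕ} (V : Fin p → Matrix (Fin m) (Fin n) ℝ) (k : Fin p) :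
    dft3 (tTrans V) k = (dft3 V k)ᴴ := by
  have : NeZero p := NeZero.of_pos k.pos
  ext r c
  simp only [dft3_apply, Matrix.conjTranspose_apply, star_sum, star_mul', tTrans,
    Matrix.transpose_apply, Complex.star_def, conj_tChar_eq_neg_right, Complex.conj_ofReal]
  exact Fintype.sum_equiv (Equiv.neg _) _ _ (by simp)

lemma dft3_tId (m : ℕ) (k : Fin p) : dft3 (tId m p) k = 1 := by
  have : NeZero p := NeZero.of_pos k.pos
  rw [dft3_eq, Fintype.sum_eq_single 0]
  · simp [tId, tChar]
  · intro l hl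
    simp [tId, Fin.val_ne_zero_iff.2 hl]

lemma dft3_neg {m n : ℕ} (A : Fin p → Matrix (Fin m) (Fin n) ℝ) (k : Fin p) :
    dft3 A (-k) = (dft3 A k).map conj := by
  ext r c
  simp only [dft3_apply, Matrix.map_apply, map_sum, map_mul, Complex.conj_ofReal,
    conj_tChar_eq_neg_left]

lemma sum_conj_tChar_smul_dft3 {m n : ℕ} (X : Fin p → Matrix (Fin m) (Fin n) ℝ) (l : Fin p) :
    ∑ k, conj (tChar p k l) • dft3 X k = (p : ℂ) • (X l).map (↑) := by
  have horth (j : Fin p) :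
      ∑ k, conj (tChar p k l) * tChar p k j = if j = l then (p : ℂ) else 0 := by
    rw [← sum_tChar_mul_conj]
    exact Finset.sum_congr rfl fun k _ => by rw [mul_comm, tChar_comm k j, tChar_comm k l]
  simp only [dft3_eq, Finset.smul_sum, smul_smul]
  rw [Finset.sum_comm]
  simp [← Finset.sum_smul, horth]

lemma dft3_injective {m n : ℕ} :
    Function.Injective (dft3 : (Fin p → Matrix (Fin m) (Fin n) ℝ) → _) := by
  intro X Y h
  funext l
  have : NeZero p := NeZero.of_pos l.pos
  have hXY := sum_conj_tChar_smul_dft3 X l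
  rw [h, sum_conj_tChar_smul_dft3,
    (smul_right_injective _ (Nat.cast_ne_zero.2 (NeZero.ne p))).eq_iff] at hXY
  exact Matrix.map_injective Complex.ofReal_injective hXY.symm

lemma exists_dft3_eq {m n : ℕ} (W : Fin p → Matrix (Fin m) (Fin n) ℂ)
    (hW : ∀ k, W (-k) = (W k).map conj) :
    ∃ V : Fin p → Matrix (Fin m) (Fin n) ℝ, dft3 V = W := by
  rcases Nat.eq_zero_or_pos p with rfl | hp
  · exact ⟨0, funext fun k => k.elim0⟩
  have : NeZero p := ⟨hp.ne'⟩
  set Z : Fin p → Matrix (Fin m) (Fin n) ℂ := fun l => (p : ℂ)⁻¹ • ∑ k, conj (tChar p k l) • W k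
  have hZ_real (l : Fin p) : ((Z l).map Complex.re).map ((↑) : ℝ → ℂ) = Z l := by
    ext r c
    rw [Matrix.map_apply, Matrix.map_apply, ← Complex.conj_eq_iff_re]
    simp only [Z, Matrix.smul_apply, Matrix.sum_apply, smul_eq_mul, map_mul, map_sum, map_inv₀,
      map_natCast, Complex.conj_conj]
    congr 1
    refine Fintype.sum_equiv (Equiv.neg _) _ _ fun k => ?_
    simp [hW, conj_tChar_eq_neg_left]
  refine ⟨fun l => (Z l).map Complex.re, funext fun k => ?_⟩
  simp only [dft3_eq, hZ_real]
  simp only [Z, Finset.smul_sum, smul_smul]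
  rw [Finset.sum_comm]
  simp [← Finset.sum_smul, mul_left_comm _ (p : ℂ)⁻¹, ← Finset.mul_sum, sum_tChar_mul_conj]

lemma tProd_tTrans_self_eq_tId_iff {m d : ℕ} (V : Fin p → Matrix (Fin m) (Fin d) ℝ) :
    tProd (tTrans V) V = tId d p ↔ ∀ k, (dft3 V k)ᴴ * dft3 V k = 1 := by
  rw [← dft3_injective.eq_iff, funext_iff]
  simp only [dft3_tProd, dft3_tTrans, dft3_tId]

lemma Matrix.IsHermitian.ofReal_re_trace {n : Type*} [Fintype n] {H : Matrix n n ℂ}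
    (hH : H.IsHermitian) : (H.trace.re : ℂ) = H.trace :=
  Complex.conj_eq_iff_re.1 (by rw [← Complex.star_def, ← trace_conjTranspose, hH.eq])

lemma tTraceF_tTrans_tProd {m d : ℕ} {A : Fin p → Matrix (Fin m) (Fin m) ℝ}
    (hA : ∀ k, (dft3 A k).IsHermitian) (V : Fin p → Matrix (Fin m) (Fin d) ℝ) :
    tTraceF (tProd (tTrans V) (tProd A V)) =
      ((1 / p : ℝ) * ∑ k, ((dft3 V k)ᴴ * dft3 A k * dft3 V k).trace.re : ℝ) := by
  simp only [tTraceF, dft3_tProd, dft3_tTrans, ← Matrix.mul_assoc]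
  push_cast
  congr 1
  exact Finset.sum_congr rfl fun k _ =>
    (isHermitian_conjTranspose_mul_mul _ (hA k)).ofReal_re_trace.symm

end DFT

lemma sum_mul_le_sum_top {n r : Type*} [Fintype n] [Fintype r] [DecidableEq n] {μ t : n → ℝ}
    (g : r ↪ n) (hg : ∀ i j, j ∉ Set.range g → μ j ≤ μ (g i)) (ht₀ : ∀ j, 0 ≤ t j)
    (ht₁ : ∀ j, t j ≤ 1) (ht : ∑ j, t j = Fintype.card r) :
    ∑ j, μ j * t j ≤ ∑ i, μ (g i) := by
  set S := Finset.univ.map g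
  have hS (j : n) : j ∈ S ↔ j ∈ Set.range g := by simp [S]
  obtain ⟨c, hcS, hcSc⟩ : ∃ c, (∀ j ∈ S, c ≤ μ j) ∧ ∀ j ∉ S, μ j ≤ c := by
    rcases S.eq_empty_or_nonempty with hSe | hSne
    · obtain ⟨c, hc⟩ := (Set.finite_range μ).bddAbove
      exact ⟨c, by simp [hSe], fun j _ => hc ⟨j, rfl⟩⟩
    · refine ⟨S.inf' hSne μ, fun j hj => S.inf'_le μ hj, fun j hj => S.le_inf' hSne μ ?_⟩
      intro i hi
      obtain ⟨i, rfl⟩ := (hS i).1 hi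
      exact hg i j (mt (hS j).2 hj)
  set s : n → ℝ := fun j => if j ∈ S then 1 else 0
  have hterm (j : n) : (μ j - c) * (t j - s j) ≤ 0 := by
    by_cases hj : j ∈ S
    · simp only [s, if_pos hj]
      exact mul_nonpos_of_nonneg_of_nonpos (sub_nonneg.2 (hcS j hj)) (by linarith [ht₁ j])
    · simp only [s, if_neg hj, sub_zero]
      exact mul_nonpos_of_nonpos_of_nonneg (sub_nonpos.2 (hcSc j hj)) (ht₀ j)
  have hs : ∑ j, s j = Fintype.card r := by
    rw [Finset.sum_ite_mem, Finset.univ_inter, Finset.sum_const, nsmul_one, Finset.card_map,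
      Finset.card_univ]
  have hμs : ∑ j, μ j * s j = ∑ i, μ (g i) := by
    simp only [s, mul_ite, mul_one, mul_zero]
    rw [Finset.sum_ite_mem, Finset.univ_inter, Finset.sum_map]
  calc ∑ j, μ j * t j
      = ∑ j, (μ j - c) * (t j - s j) + c * (∑ j, t j - ∑ j, s j) + ∑ j, μ j * s j := by
        simp only [sub_mul, mul_sub, Finset.sum_sub_distrib, Finset.mul_sum]
        ring
    _ ≤ ∑ i, μ (g i) := by
        rw [ht, hs, sub_self, mul_zero, add_zero, hμs]
        linarith [Finset.sum_nonpos fun j (_ : j ∈ Finset.univ) => hterm j]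

lemma Antitone.le_of_notMem_range_castLEEmb {m d : ℕ} (hd : d ≤ m) {μ : Fin m → ℝ}
    (hμ : Antitone μ) (i : Fin d) (j : Fin m) (hj : j ∉ Set.range (Fin.castLEEmb hd)) :
    μ j ≤ μ (Fin.castLEEmb hd i) := by
  have hdj : d ≤ j.val := by
    by_contra! h
    exact hj ⟨⟨j, h⟩, rfl⟩
  exact hμ (Fin.le_def.2 (by simp; omega))

namespace Matrix

lemma conjTranspose_submatrix_mul_mul_submatrix {n r α : Type*} [Fintype n] [Semiring α]
    [StarRing α] (U X : Matrix n n α) (g : r → n) :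
    (U.submatrix id g)ᴴ * X * U.submatrix id g = (Uᴴ * X * U).submatrix g g := by
  rw [submatrix_mul _ _ _ id _ Function.bijective_id,
    submatrix_mul _ _ _ id _ Function.bijective_id, conjTranspose_submatrix]
  rfl

lemma conjTranspose_submatrix_mul_diagonal_mul {n r α : Type*} [Fintype n] [DecidableEq n]
    [DecidableEq r] [Semiring α] [StarRing α] {U : Matrix n n α} (hU : Uᴴ * U = 1) (g : r ↪ n)
    (f : n → α) :
    (U.submatrix id g)ᴴ * (U * diagonal f * Uᴴ) * U.submatrix id g = diagonal (f ∘ g) := by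
  rw [conjTranspose_submatrix_mul_mul_submatrix, ← Matrix.mul_assoc, ← Matrix.mul_assoc, hU,
    Matrix.one_mul, Matrix.mul_assoc, hU, Matrix.mul_one, submatrix_diagonal_embedding]

lemma conjTranspose_map_conj {n r : Type*} (W : Matrix n r ℂ) : (W.map conj)ᴴ = Wᴴ.map conj :=
  (conjTranspose_map _ fun _ => rfl).symm

lemma IsHermitian.exists_antitone_diagonalization {𝕜 : Type*} [RCLike 𝕜] {m : ℕ}
    {A : Matrix (Fin m) (Fin m) 𝕜} (hA : A.IsHermitian) :
    ∃ (U : Matrix (Fin m) (Fin m) 𝕜) (ν : Fin m → ℝ), Antitone ν ∧ Uᴴ * U = 1 ∧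
      A = U * diagonal (fun j => (ν j : 𝕜)) * Uᴴ := by
  set σ := Tuple.sort (fun j => -hA.eigenvalues j)
  set U : Matrix (Fin m) (Fin m) 𝕜 := ↑hA.eigenvectorUnitary
  have hU : Uᴴ * U = 1 := Unitary.coe_star_mul_self hA.eigenvectorUnitary
  refine ⟨U.submatrix id σ, hA.eigenvalues ∘ σ, fun a b hab => ?_, ?_, ?_⟩
  · simpa using Tuple.monotone_sort (fun j => -hA.eigenvalues j) hab
  · simpa [hU] using conjTranspose_submatrix_mul_mul_submatrix U 1 σ
  · have hD : diagonal (fun j => ((hA.eigenvalues ∘ σ) j : 𝕜)) =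
        (diagonal (RCLike.ofReal ∘ hA.eigenvalues)).submatrix σ σ :=
      (submatrix_diagonal_equiv (RCLike.ofReal ∘ hA.eigenvalues) σ).symm
    rw [hD, conjTranspose_submatrix, submatrix_mul_equiv, submatrix_mul_equiv, submatrix_id_id]
    exact hA.spectral_theorem

section TraceMaximization

variable {n r : Type*} [Fintype n] [Fintype r] [DecidableEq r]

def IsTraceMaximizer (M : Matrix n n ℂ) (W : Matrix n r ℂ) : Prop :=
  Wᴴ * W = 1 ∧
    ∀ W' : Matrix n r ℂ, W'ᴴ * W' = 1 → (W'ᴴ * M * W').trace.re ≤ (Wᴴ * M * W).trace.re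

lemma re_trace_conjTranspose_mul_mul_le [DecidableEq n] {μ : n → ℝ} (g : r ↪ n)
    (hg : ∀ i j, j ∉ Set.range g → μ j ≤ μ (g i)) {U : Matrix n n ℂ} (hU : Uᴴ * U = 1)
    {W : Matrix n r ℂ} (hW : Wᴴ * W = 1) :
    (Wᴴ * (U * diagonal (fun j => (μ j : ℂ)) * Uᴴ) * W).trace.re ≤ ∑ i, μ (g i) := by
  set Y := Uᴴ * W
  have hY : Yᴴ * Y = 1 := by
    rw [conjTranspose_mul, conjTranspose_conjTranspose, Matrix.mul_assoc, ← Matrix.mul_assoc U,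
      mul_eq_one_comm.1 hU, Matrix.one_mul, hW]
  set P := Y * Yᴴ
  have hP : P.PosSemidef := posSemidef_self_mul_conjTranspose Y
  have hP_le : (1 - P).PosSemidef := by
    have h : 1 - P = (1 - P)ᴴ * (1 - P) := by
      simp only [P, conjTranspose_sub, conjTranspose_one, conjTranspose_mul,
        conjTranspose_conjTranspose, Matrix.sub_mul, Matrix.mul_sub, Matrix.one_mul,
        Matrix.mul_one, Matrix.mul_assoc, ← Matrix.mul_assoc Yᴴ Y, hY]
      abel
    rw [h]
    exact posSemidef_conjTranspose_mul_self _
  have htrace : Wᴴ * (U * diagonal (fun j => (μ j : ℂ)) * Uᴴ) * W =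
      Yᴴ * diagonal (fun j => (μ j : ℂ)) * Y := by
    simp only [Y, conjTranspose_mul, conjTranspose_conjTranspose, Matrix.mul_assoc]
  rw [htrace, trace_mul_cycle, trace_mul_comm, trace, Complex.re_sum]
  simp only [diag_apply, diagonal_mul, Complex.re_ofReal_mul]
  refine sum_mul_le_sum_top g hg (fun j => ?_) (fun j => ?_) ?_
  · exact (Complex.nonneg_iff.1 hP.diag_nonneg).1
  · simpa using (Complex.nonneg_iff.1 (hP_le.diag_nonneg (i := j))).1
  · have := congrArg Complex.re (trace_mul_comm Y Yᴴ)
    rw [hY, trace_one, trace, Complex.re_sum] at this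
    simpa using this

lemma isTraceMaximizer_submatrix [DecidableEq n] {μ : n → ℝ} (g : r ↪ n)
    (hg : ∀ i j, j ∉ Set.range g → μ j ≤ μ (g i)) {U : Matrix n n ℂ} (hU : Uᴴ * U = 1) :
    IsTraceMaximizer (U * diagonal (fun j => (μ j : ℂ)) * Uᴴ) (U.submatrix id g) := by
  refine ⟨by simpa [hU] using conjTranspose_submatrix_mul_mul_submatrix U 1 g, fun W' hW' => ?_⟩
  rw [conjTranspose_submatrix_mul_diagonal_mul hU g, trace_diagonal]
  simpa using re_trace_conjTranspose_mul_mul_le g hg hU hW'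

lemma IsTraceMaximizer.re_trace_eq [DecidableEq n] {μ : n → ℝ} (g : r ↪ n)
    (hg : ∀ i j, j ∉ Set.range g → μ j ≤ μ (g i)) {U : Matrix n n ℂ} (hU : Uᴴ * U = 1)
    {W : Matrix n r ℂ} (hW : IsTraceMaximizer (U * diagonal (fun j => (μ j : ℂ)) * Uᴴ) W) :
    (Wᴴ * (U * diagonal (fun j => (μ j : ℂ)) * Uᴴ) * W).trace.re = ∑ i, μ (g i) := by
  refine le_antisymm (re_trace_conjTranspose_mul_mul_le g hg hU hW.1) ?_
  have := hW.2 _ (isTraceMaximizer_submatrix g hg hU).1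
  rw [conjTranspose_submatrix_mul_diagonal_mul hU g, trace_diagonal] at this
  simpa using this

lemma IsTraceMaximizer.map_conj {M : Matrix n n ℂ} {W : Matrix n r ℂ}
    (hW : IsTraceMaximizer M W) : IsTraceMaximizer (M.map conj) (W.map conj) := by
  have hre (W' : Matrix n r ℂ) :
      ((W'.map conj)ᴴ * M.map conj * W'.map conj).trace.re = (W'ᴴ * M * W').trace.re := by
    rw [conjTranspose_map_conj, ← Matrix.map_mul, ← Matrix.map_mul]
    simp only [trace, diag_apply, map_apply, Complex.re_sum, Complex.conj_re]
  have hframe (W' : Matrix n r ℂ) (hW' : W'ᴴ * W' = 1) : (W'.map conj)ᴴ * W'.map conj = 1 := by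
    rw [conjTranspose_map_conj, ← Matrix.map_mul, hW']
    simp
  refine ⟨hframe W hW.1, fun W' hW' => ?_⟩
  have hW'' : (W'.map conj).map conj = W' := by ext; simp
  rw [hre, ← hW'', hre]
  exact hW.2 _ (hframe W' hW')

end TraceMaximization

lemma exists_isTraceMaximizer_map_conj_eq {m d : ℕ} (hd : d ≤ m) {M : Matrix (Fin m) (Fin m) ℂ}
    (hM : M.IsHermitian) (hreal : M.map conj = M) :
    ∃ W : Matrix (Fin m) (Fin d) ℂ, IsTraceMaximizer M W ∧ W.map conj = W := by
  set B : Matrix (Fin m) (Fin m) ℝ := M.map Complex.re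
  set φ : Matrix (Fin m) (Fin m) ℝ →+* Matrix (Fin m) (Fin m) ℂ := Complex.ofRealHom.mapMatrix
  have hφ (X : Matrix (Fin m) (Fin m) ℝ) : (φ X)ᴴ = φ Xᴴ :=
    (conjTranspose_map _ fun _ => by simp).symm
  have hBM : φ B = M := by
    ext r c
    exact Complex.conj_eq_iff_re.1 (congrFun (congrFun hreal r) c)
  have hB : B.IsHermitian := by
    ext r c
    simpa [B] using congrArg Complex.re (congrFun (congrFun hM r) c)
  obtain ⟨O, ν, hν, hO, hBO⟩ := hB.exists_antitone_diagonalization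
  have hOc : (φ O)ᴴ * φ O = 1 := by rw [hφ, ← map_mul, hO, map_one]
  have hMO : M = φ O * diagonal (fun j => (ν j : ℂ)) * (φ O)ᴴ := by
    rw [← hBM, hBO, map_mul, map_mul, hφ]
    congr 2
    exact diagonal_map (by simp)
  refine ⟨(φ O).submatrix id (Fin.castLEEmb hd), ?_, by ext; simp [φ]⟩
  rw [hMO]
  exact isTraceMaximizer_submatrix _ (hν.le_of_notMem_range_castLEEmb hd) hOc

end Matrix

lemma exists_neg_equivariant_choice {ι X : Type*} [LinearOrder ι] [InvolutiveNeg ι] {c : X → X}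
    (hc : Function.Involutive c) {P : ι → X → Prop} (hP : ∀ i x, P i x → P (-i) (c x))
    (h : ∀ i, ∃ x, P i x ∧ (-i = i → c x = x)) :
    ∃ f : ι → X, ∀ i, P i (f i) ∧ f (-i) = c (f i) := by
  choose g hg hfix using h
  refine ⟨fun i => if -i < i then c (g (-i)) else g i, fun i => ?_⟩
  rcases lt_trichotomy (-i) i with hlt | heq | hgt
  · simp only [neg_neg, if_pos hlt, if_neg hlt.not_gt, hc _]
    exact ⟨by simpa using hP _ _ (hg (-i)), trivial⟩
  · simp only [heq, lt_irrefl, if_false]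
    exact ⟨hg i, (hfix i heq).symm⟩
  · simp only [neg_neg, if_neg hgt.not_gt, if_pos hgt]
    exact ⟨hg i, trivial⟩

theorem tensor_trace_max_general (m d p : ℕ) (hd : d ≤ m)
    (A : Fin p → Matrix (Fin m) (Fin m) ℝ)
    (hsym : ∀ i, (dft3 A i).IsHermitian)
    (μ : Fin p → Fin m → ℝ)
    (hdec : ∀ i, Antitone (μ i))
    (hspec : ∀ i, ∃ U : Matrix (Fin m) (Fin m) ℂ, Uᴴ * U = 1 ∧
        dft3 A i = U * Matrix.diagonal (fun j => (μ i j : ℂ)) * Uᴴ) :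
    IsGreatest { t : ℝ | ∃ V : Fin p → Matrix (Fin m) (Fin d) ℝ,
        tProd (tTrans V) V = tId d p ∧
        tTraceF (tProd (tTrans V) (tProd A V)) = (t : ℂ) }
      ((1 / (p : ℝ)) * ∑ i : Fin p, ∑ j : Fin d, μ i (Fin.castLE hd j)) := by
  have htop (k : Fin p) := (hdec k).le_of_notMem_range_castLEEmb hd
  obtain ⟨W, hW⟩ : ∃ W : Fin p → Matrix (Fin m) (Fin d) ℂ,
      ∀ k, IsTraceMaximizer (dft3 A k) (W k) ∧ W (-k) = (W k).map conj := by
    refine exists_neg_equivariant_choice (c := fun W : Matrix (Fin m) (Fin d) ℂ => W.map conj)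
      (fun W => by ext; simp) (fun k W hW => ?_) fun k => ?_
    · rw [dft3_neg]
      exact hW.map_conj
    · by_cases hk : -k = k
      · obtain ⟨W, hWmax, hWreal⟩ :=
          exists_isTraceMaximizer_map_conj_eq hd (hsym k) (by rw [← dft3_neg, hk])
        exact ⟨W, hWmax, fun _ => hWreal⟩
      · obtain ⟨U, hU, hA⟩ := hspec k
        exact ⟨_, hA ▸ isTraceMaximizer_submatrix _ (htop k) hU, fun h => absurd h hk⟩
  have hval (k : Fin p) :
      ((W k)ᴴ * dft3 A k * W k).trace.re = ∑ j : Fin d, μ k (Fin.castLE hd j) := by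
    obtain ⟨U, hU, hA⟩ := hspec k
    have hWk := (hW k).1
    rw [hA] at hWk ⊢
    exact hWk.re_trace_eq _ (htop k) hU
  obtain ⟨V, rfl⟩ := exists_dft3_eq W fun k => (hW k).2
  refine ⟨⟨V, (tProd_tTrans_self_eq_tId_iff V).2 fun k => (hW k).1.1, ?_⟩, ?_⟩
  · rw [tTraceF_tTrans_tProd hsym]
    simp [hval]
  · rintro t ⟨V', hV', ht⟩
    rw [tTraceF_tTrans_tProd hsym, Complex.ofReal_inj] at ht
    rw [← ht, ← Finset.sum_congr rfl fun k _ => hval k]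
    refine mul_le_mul_of_nonneg_left (Finset.sum_le_sum fun k _ => ?_) (by positivity)
    exact (hW k).1.2 _ ((tProd_tTrans_self_eq_tId_iff V').1 hV' k)

/-- Tensor trace maximization: for an f-symmetric f-positive-definite tensor A,
    max over V with V^T * V = I of Trace_f(V^T * A * V) = (1/p) Σ_i Σ_{j<d} λ_j(Â_i). -/
theorem tensor_trace_max (m d p : ℕ) (hd : d ≤ m)
    (A : Fin p → Matrix (Fin m) (Fin m) ℝ)
    (hsym : ∀ i, (dft3 A i).IsHermitian)
    (hpd : ∀ i, (dft3 A i).PosDef)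
    (μ : Fin p → Fin m → ℝ)
    (hdec : ∀ i, Antitone (μ i))
    (hspec : ∀ i, ∃ U : Matrix (Fin m) (Fin m) ℂ, Uᴴ * U = 1 ∧
        dft3 A i = U * Matrix.diagonal (fun j => (μ i j : ℂ)) * Uᴴ) :
    IsGreatest { t : ℝ | ∃ V : Fin p → Matrix (Fin m) (Fin d) ℝ,
        tProd (tTrans V) V = tId d p ∧
        tTraceF (tProd (tTrans V) (tProd A V)) = (t : ℂ) }
      ((1 / (p : ℝ)) * ∑ i : Fin p, ∑ j : Fin d, μ i (Fin.castLE hd j)) :=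
  tensor_trace_max_general m d p hd A hsym μ hdec hspec
end
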